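/- arXiv:1905.13571 — 2 statements merged into one kernel-verified Lean document; each statement's English description precedes it below -/
import Mathlib

section
/- Let A be a Poisson algebra over a field F of characteristic zero such that A contains no nonzero nilpotent element. If a ∈ A satisfies ad(a)^n = 0 for some n ≥ 2, then ad(a)^{n-1} = 0, where ad(a) : A → A is the map x ↦ {a,x}. -/
/-! For fixed `a`, `D = ad(a)` is a derivation of `A`. If `D^(m+1) = 0` with `m ≥ 1`, the general
Leibniz rule collapses `D^(2m) (x * x)` to its middle term `C(2m, m) • (D^m x)^2`, because every
other term contains some `D^k x` with `k > m`. The left side vanishes since `2m ≥ m + 1`, so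
`(D^m x)^2 = 0` in characteristic zero, and `D^m x = 0` because `A` is reduced. -/

/-- A Poisson bracket on a commutative `F`-algebra `A`: an `F`-bilinear map
`{,} : A × A → A` making `(A, {,})` a Lie algebra and satisfying the Leibniz
rule `{ab, c} = a{b,c} + {a,c}b`. -/
structure PoissonBracket (F : Type*) (A : Type*) [Field F] [CommRing A] [Algebra F A] where
  br : A →ₗ[F] A →ₗ[F] A
  br_self : ∀ a : A, br a a = 0
  jacobi : ∀ a b c : A, br a (br b c) + br b (br c a) + br c (br a b) = 0
  leibniz : ∀ a b c : A, br (a * b) c = a * br b c + br a c * b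

namespace PoissonBracket

variable {F A : Type*} [Field F] [CommRing A] [Algebra F A]

/-- `{A, A}` : the `F`-linear span of all brackets `{a, b}`, `a, b ∈ A`. -/
def lieSpan (P : PoissonBracket F A) : Submodule F A :=
  Submodule.span F {x : A | ∃ a b : A, P.br a b = x}

/-- `{M, N}` : the `F`-linear span of all brackets `{u, v}`, `u ∈ M`, `v ∈ N`. -/
def brSpan (P : PoissonBracket F A) (M N : Submodule F A) : Submodule F A :=
  Submodule.span F {x : A | ∃ u ∈ M, ∃ v ∈ N, P.br u v = x}

/-- `U` is an ideal of the Lie algebra `{A, A}`. -/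
def IsLieIdealOfBrackets (P : PoissonBracket F A) (U : Submodule F A) : Prop :=
  U ≤ P.lieSpan ∧ ∀ x ∈ P.lieSpan, ∀ u ∈ U, P.br x u ∈ U

/-- The derived series `U^[0] = U`, `U^[i+1] = {U^[i], U^[i]}`. -/
def derived (P : PoissonBracket F A) (U : Submodule F A) : ℕ → Submodule F A
  | 0 => U
  | (i + 1) => P.brSpan (P.derived U i) (P.derived U i)

/-- `A` is a simple Poisson algebra: it has no Poisson ideals other than `(0)` and `A`. -/
def IsSimple (P : PoissonBracket F A) : Prop :=
  ∀ I : Ideal A, (∀ a ∈ I, ∀ b : A, P.br a b ∈ I) → I = ⊥ ∨ I = ⊤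

/-- The Poisson center `Z = {a ∈ A | {a, A} = (0)}`. -/
def pCenter (P : PoissonBracket F A) : Submodule F A where
  carrier := {a : A | ∀ b : A, P.br a b = 0}
  add_mem' := by
    intro x y hx hy b
    simp [map_add, hx b, hy b]
  zero_mem' := by
    intro b
    simp
  smul_mem' := by
    intro c x hx b
    simp [map_smul, hx b]

end PoissonBracket

variable {F A : Type*} [Field F] [CommRing A] [Algebra F A]

open PoissonBracket

open Finset

namespace Derivation

variable {R S : Type*} [CommSemiring R] [CommSemiring S] [Algebra R S]

theorem iterate_apply_mul (D : Derivation R S S) (n : ℕ) (a b : S) :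
    D^[n] (a * b) = ∑ ij ∈ antidiagonal n, n.choose ij.1 • (D^[ij.1] a * D^[ij.2] b) := by
  induction n with
  | zero => simp
  | succ n ih =>
    rw [sum_antidiagonal_choose_succ_nsmul (fun i j => D^[i] a * D^[j] b) n]
    simp only [Function.iterate_succ_apply', ih, map_sum, map_nsmul, leibniz, smul_eq_mul,
      smul_add, sum_add_distrib]
    congr 1
    refine sum_congr rfl fun ⟨i, j⟩ hij => ?_
    rw [n.choose_symm_of_eq_add (HasAntidiagonal.mem_antidiagonal.1 hij).symm, mul_comm]

theorem iterate_apply_eq_zero_of_le {D : Derivation R S S} {m k : ℕ}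
    (h : ∀ x, D^[m] x = 0) (hk : m ≤ k) (x : S) : D^[k] x = 0 := by
  obtain ⟨j, rfl⟩ := Nat.exists_eq_add_of_le' hk
  rw [Function.iterate_add_apply, h, iterate_map_zero]

theorem iterate_apply_mul_self_of_iterate_succ_eq_zero {D : Derivation R S S} {m : ℕ}
    (h : ∀ x, D^[m + 1] x = 0) (x : S) :
    D^[2 * m] (x * x) = (2 * m).choose m • (D^[m] x) ^ 2 := by
  rw [iterate_apply_mul, sum_eq_single (⟨m, m⟩ : ℕ × ℕ)]
  · simp [sq]
  · rintro ⟨i, j⟩ hij hne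
    rw [HasAntidiagonal.mem_antidiagonal] at hij
    simp only [ne_eq, Prod.mk.injEq] at hne
    rcases lt_or_ge m i with hi | hi
    · simp [iterate_apply_eq_zero_of_le h hi]
    · simp [iterate_apply_eq_zero_of_le h (show m + 1 ≤ j by omega)]
  · simp [two_mul]

theorem iterate_eq_zero_of_iterate_succ_eq_zero [IsReduced S] [IsAddTorsionFree S]
    {D : Derivation R S S} {m : ℕ} (hm : m ≠ 0) (h : ∀ x, D^[m + 1] x = 0) (x : S) :
    D^[m] x = 0 := by
  have hsq : (2 * m).choose m • (D^[m] x) ^ 2 = 0 := by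
    rw [← iterate_apply_mul_self_of_iterate_succ_eq_zero h,
      iterate_apply_eq_zero_of_le h (by omega)]
  rw [smul_eq_zero_iff_right (Nat.choose_pos (by omega)).ne'] at hsq
  exact IsReduced.eq_zero _ ⟨2, hsq⟩

end Derivation

namespace PoissonBracket

theorem br_skew (P : PoissonBracket F A) (u v : A) : -P.br v u = P.br u v := by
  have h := P.br_self (u + v)
  simp only [map_add, LinearMap.add_apply, P.br_self, zero_add, add_zero] at h
  exact (eq_neg_of_add_eq_zero_right h).symm

def ad (P : PoissonBracket F A) (a : A) : Derivation F A A :=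
  Derivation.mk' (P.br a) fun x y => by
    rw [← P.br_skew, P.leibniz, ← P.br_skew y, ← P.br_skew x, smul_eq_mul, smul_eq_mul]
    ring

end PoissonBracket

/-- If a Poisson algebra over a field of characteristic zero has no nonzero
nilpotent elements and `ad(a)^n = 0` for some `n ≥ 2`, then `ad(a)^(n-1) = 0`. -/
theorem ad_nilpotent_descend [CharZero F]
    (P : PoissonBracket F A)
    (hred : ∀ x : A, ∀ m : ℕ, 1 ≤ m → x ^ m = 0 → x = 0)
    (a : A) (n : ℕ) (hn : 2 ≤ n) (h : (P.br a) ^ n = 0) :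
    (P.br a) ^ (n - 1) = 0 := by
  have : IsReduced A :=
    ⟨fun x ⟨m, hm⟩ => hred x (m + 1) (by omega) (by rw [pow_succ, hm, zero_mul])⟩
  have : IsAddTorsionFree A := .of_isTorsionFree F A
  obtain ⟨m, rfl⟩ : ∃ m, n = m + 1 := ⟨n - 1, by omega⟩
  have hD (y : A) : (P.br a)^[m + 1] y = 0 := by
    rw [← Module.End.pow_apply, h, LinearMap.zero_apply]
  ext x
  rw [Nat.add_sub_cancel, LinearMap.zero_apply, Module.End.pow_apply]
  exact (P.ad a).iterate_eq_zero_of_iterate_succ_eq_zero (by omega) hD x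
end

section
/- Let A be a Poisson algebra over a field F and let I be an ideal of the Lie algebra {A,A}. Then {{I,I}, A} ⊆ I. Consequently, if U is an ideal of {A,A} with derived series U^[0] = U, U^[i+1] = {U^[i],U^[i]}, then {U^[i+1], A} ⊆ U^[i] for all i ≥ 0. -/
/-!
By the Jacobi identity `{{u,v},a} = {u,{v,a}} - {v,{u,a}}`. Since `{v,a}` and `{u,a}` lie in
`{A,A}`, both terms lie in `I` when `u, v ∈ I`; this gives `{{I,I},A} ⊆ I`. The same identity in
the form `{x,{p,q}} = {{x,p},q} + {p,{x,q}}` shows that `{U,U}` is again an ideal of `{A,A}`, so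
every term of the derived series is one and the first claim applies to it.
-/

namespace PoissonBracket

variable {F A : Type*} [Field F] [CommRing A] [Algebra F A]

section Bracket

variable (P : PoissonBracket F A)

theorem br_anticomm (a b : A) : P.br a b = -P.br b a := by
  have h := P.br_self (a + b)
  simp only [map_add, LinearMap.add_apply, P.br_self, zero_add, add_zero] at h
  exact eq_neg_of_add_eq_zero_right h

theorem br_br_left (u v a : A) :
    P.br (P.br u v) a = P.br u (P.br v a) - P.br v (P.br u a) := by
  have j := P.jacobi a u v
  rw [P.br_anticomm a, P.br_anticomm a u, map_neg] at j
  linear_combination -j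

theorem br_br_right (x p q : A) :
    P.br x (P.br p q) = P.br (P.br x p) q + P.br p (P.br x q) := by
  have j := P.jacobi x p q
  rw [P.br_anticomm q x, map_neg, P.br_anticomm q] at j
  linear_combination j

theorem br_mem_lieSpan (a b : A) : P.br a b ∈ P.lieSpan :=
  Submodule.subset_span ⟨a, b, rfl⟩

theorem br_mem_brSpan {M N : Submodule F A} {u v : A} (hu : u ∈ M) (hv : v ∈ N) :
    P.br u v ∈ P.brSpan M N :=
  Submodule.subset_span ⟨u, hu, v, hv, rfl⟩

theorem brSpan_le_iff {M N S : Submodule F A} :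
    P.brSpan M N ≤ S ↔ ∀ u ∈ M, ∀ v ∈ N, P.br u v ∈ S := by
  refine Submodule.span_le.trans ⟨fun h u hu v hv => h ⟨u, hu, v, hv, rfl⟩, ?_⟩
  rintro h _ ⟨u, hu, v, hv, rfl⟩
  exact h u hu v hv

end Bracket

namespace IsLieIdealOfBrackets

variable {P : PoissonBracket F A} {U V : Submodule F A}

theorem br_br_mem (hU : P.IsLieIdealOfBrackets U) {u : A} (hu : u ∈ U) (b c : A) :
    P.br u (P.br b c) ∈ U := by
  rw [P.br_anticomm]
  exact neg_mem (hU.2 _ (P.br_mem_lieSpan b c) u hu)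

theorem br_mem_sup (hU : P.IsLieIdealOfBrackets U) (hV : P.IsLieIdealOfBrackets V) {x : A}
    (hx : x ∈ P.brSpan U V) (a : A) : P.br x a ∈ U ⊔ V := by
  suffices P.brSpan U V ≤ (U ⊔ V).comap (P.br.flip a) from this hx
  refine P.brSpan_le_iff.2 fun u hu v hv => ?_
  rw [Submodule.mem_comap, LinearMap.flip_apply, br_br_left]
  exact sub_mem (Submodule.mem_sup_left (hU.br_br_mem hu v a))
    (Submodule.mem_sup_right (hV.br_br_mem hv u a))

theorem br_mem_of_mem_brSpan_self (hU : P.IsLieIdealOfBrackets U) {x : A}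
    (hx : x ∈ P.brSpan U U) (a : A) : P.br x a ∈ U :=
  sup_idem U ▸ hU.br_mem_sup hU hx a

theorem brSpan (hU : P.IsLieIdealOfBrackets U) (hV : P.IsLieIdealOfBrackets V) :
    P.IsLieIdealOfBrackets (P.brSpan U V) := by
  refine ⟨P.brSpan_le_iff.2 fun u _ v _ => P.br_mem_lieSpan u v, fun x hx => ?_⟩
  suffices P.brSpan U V ≤ (P.brSpan U V).comap (P.br x) from fun u hu => this hu
  refine P.brSpan_le_iff.2 fun p hp q hq => ?_
  rw [Submodule.mem_comap, br_br_right]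
  exact add_mem (P.br_mem_brSpan (hU.2 x hx p hp) hq) (P.br_mem_brSpan hp (hV.2 x hx q hq))

theorem derived (hU : P.IsLieIdealOfBrackets U) : ∀ i, P.IsLieIdealOfBrackets (P.derived U i)
  | 0 => hU
  | i + 1 => (derived hU i).brSpan (derived hU i)

end IsLieIdealOfBrackets

end PoissonBracket

variable {F A : Type*} [Field F] [CommRing A] [Algebra F A]

open PoissonBracket

/-- For every ideal `I` of the Lie algebra `{A, A}` one has `{{I, I}, A} ⊆ I`;
consequently `{U^[i+1], A} ⊆ U^[i]` for every ideal `U` of `{A, A}` and all `i ≥ 0`. -/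
theorem brackets_of_derived_subset
    (P : PoissonBracket F A) (I : Submodule F A) (hI : P.IsLieIdealOfBrackets I) :
    (∀ x ∈ P.brSpan I I, ∀ a : A, P.br x a ∈ I) ∧
      ∀ U : Submodule F A, P.IsLieIdealOfBrackets U →
        ∀ i : ℕ, ∀ x ∈ P.derived U (i + 1), ∀ a : A, P.br x a ∈ P.derived U i :=
  ⟨fun _ hx => hI.br_mem_of_mem_brSpan_self hx,
    fun _ hU i _ hx => (hU.derived i).br_mem_of_mem_brSpan_self hx⟩
end
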